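/- For every j∈{1,…,M}, the set Γ^{(j)} = {π∈S^M : V₀(π)=h(π)=h_j(π)} contains the set {π∈S^M : h_j(π) ≤ min{h(π), c(1−π₀)}}, and in particular contains the unit vector e_j; moreover, for every λ∈(0, c/(a_{0j}+c)], the point λe₀+(1−λ)e_j belongs to Γ = {π∈S^M : V₀(π)=h(π)}, so that Γ strictly contains the finite set {e_1,…,e_M} of corners of S^M. -/
import Mathlib


open MeasureTheory Finset Filter
open scoped ENNReal

noncomputable section

/-- The analytic data of the change-diagnosis problem: a σ-finite reference measure `m`
on the observation space, probability densities `f₀, …, f_M`, the geometric parameter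
`p ∈ (0,1)`, the prior `ν` on the change index, the delay cost `c > 0` and the
terminal-decision costs `a_{ij}` (with `a_{ii} = 0`). -/
structure DiagSetup (E : Type*) [MeasurableSpace E] (M : ℕ) : Type _ where
  /-- σ-finite reference measure -/
  m : Measure E
  hm : SigmaFinite m
  /-- `f 0` is the pre-change density, `f i.succ` the post-change densities -/
  f : Fin (M + 1) → E → ℝ
  hf_meas : ∀ i, Measurable (f i)
  hf_nonneg : ∀ i x, 0 ≤ f i x
  hf_int : ∀ i, ∫ x, f i x ∂m = 1
  p : ℝ
  hp : p ∈ Set.Ioo (0 : ℝ) 1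
  ν : Fin M → ℝ
  hν : ∀ i, 0 < ν i
  hνsum : ∑ i, ν i = 1
  c : ℝ
  hc : 0 < c
  a : Fin (M + 1) → Fin M → ℝ
  ha : ∀ i j, 0 ≤ a i j
  haii : ∀ i : Fin M, a i.succ i = 0
  hM : 1 ≤ M

namespace DiagSetup

variable {E : Type*} [MeasurableSpace E] {M : ℕ}

/-- `D_i(π, x)`:  `D₀(π,x) = (1-p)π₀f₀(x)` and `D_i(π,x) = (π_i + π₀ p ν_i) f_i(x)`. -/
def D (S : DiagSetup E M) (i : Fin (M + 1)) (π : Fin (M + 1) → ℝ) (x : E) : ℝ :=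
  Fin.cases ((1 - S.p) * π 0 * S.f 0 x)
    (fun j => (π j.succ + π 0 * S.p * S.ν j) * S.f j.succ x) i

/-- `D(π, x) = Σ_{i=0}^M D_i(π, x)`. -/
def Dsum (S : DiagSetup E M) (π : Fin (M + 1) → ℝ) (x : E) : ℝ :=
  ∑ i, S.D i π x

/-- The operator `T`:
`(Tg)(π) = ∫_E D(π,x) g(D₀(π,x)/D(π,x), …, D_M(π,x)/D(π,x)) m(dx)`,
with the integrand interpreted as `0` where `D(π,x) = 0`. -/
def T (S : DiagSetup E M) (g : (Fin (M + 1) → ℝ) → ℝ) (π : Fin (M + 1) → ℝ) : ℝ :=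
  ∫ x, (if S.Dsum π x = 0 then 0
        else S.Dsum π x * g fun i => S.D i π x / S.Dsum π x) ∂S.m

/-- `h_j(π) = Σ_{i=0}^M π_i a_{ij}`. -/
def hj (S : DiagSetup E M) (j : Fin M) (π : Fin (M + 1) → ℝ) : ℝ :=
  ∑ i : Fin (M + 1), π i * S.a i j

/-- `h(π) = min_{j∈{1,…,M}} h_j(π)`. -/
def hmin (S : DiagSetup E M) (π : Fin (M + 1) → ℝ) : ℝ :=
  ⨅ j : Fin M, S.hj j π

/-- The dynamic-programming operator `(𝕄g)(π) = min{h(π), c(1-π₀) + (Tg)(π)}`. -/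
def Mop (S : DiagSetup E M) (g : (Fin (M + 1) → ℝ) → ℝ) (π : Fin (M + 1) → ℝ) : ℝ :=
  min (S.hmin π) (S.c * (1 - π 0) + S.T g π)

/-- `V^N = 𝕄^N h`, the value functions of the truncated problems. -/
def V (S : DiagSetup E M) (N : ℕ) : (Fin (M + 1) → ℝ) → ℝ :=
  S.Mop^[N] S.hmin

end DiagSetup

namespace DiagSetup

variable {E : Type*} [MeasurableSpace E] {M : ℕ}

/-- `Γ^{(j)} = {π ∈ S^M : V₀(π) = h(π) = h_j(π)}`. -/
def Gamma (S : DiagSetup E M) (V0 : (Fin (M + 1) → ℝ) → ℝ) (j : Fin M) :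
    Set (Fin (M + 1) → ℝ) :=
  {π | π ∈ stdSimplex ℝ (Fin (M + 1)) ∧ V0 π = S.hmin π ∧ S.hmin π = S.hj j π}

/-- `Γ = {π ∈ S^M : V₀(π) = h(π)}`, the optimal stopping region. -/
def GammaAll (S : DiagSetup E M) (V0 : (Fin (M + 1) → ℝ) → ℝ) :
    Set (Fin (M + 1) → ℝ) :=
  {π | π ∈ stdSimplex ℝ (Fin (M + 1)) ∧ V0 π = S.hmin π}

lemma D_nonneg (S : DiagSetup E M) {π : Fin (M + 1) → ℝ} (hπ : ∀ i, 0 ≤ π i)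
    (i : Fin (M + 1)) (x : E) : 0 ≤ S.D i π x := by
  induction i using Fin.cases with
  | zero =>
    simp only [D, Fin.cases_zero]
    exact mul_nonneg (mul_nonneg (by linarith [S.hp.2]) (hπ 0)) (S.hf_nonneg 0 x)
  | succ j =>
    simp only [D, Fin.cases_succ]
    exact mul_nonneg (add_nonneg (hπ j.succ)
      (mul_nonneg (mul_nonneg (hπ 0) S.hp.1.le) (S.hν j).le)) (S.hf_nonneg j.succ x)

lemma hj_nonneg (S : DiagSetup E M) {π : Fin (M + 1) → ℝ} (hπ : ∀ i, 0 ≤ π i)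
    (j : Fin M) : 0 ≤ S.hj j π :=
  Finset.sum_nonneg fun i _ => mul_nonneg (hπ i) (S.ha i j)

lemma hmin_nonneg (S : DiagSetup E M) {π : Fin (M + 1) → ℝ} (hπ : ∀ i, 0 ≤ π i) :
    0 ≤ S.hmin π :=
  Real.iInf_nonneg fun j => S.hj_nonneg hπ j

lemma hmin_le_hj (S : DiagSetup E M) (π : Fin (M + 1) → ℝ) (j : Fin M) :
    S.hmin π ≤ S.hj j π :=
  ciInf_le (Set.Finite.bddBelow (Set.finite_range _)) j

lemma T_nonneg (S : DiagSetup E M) {g : (Fin (M + 1) → ℝ) → ℝ}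
    (hg : ∀ σ ∈ stdSimplex ℝ (Fin (M + 1)), 0 ≤ g σ)
    {π : Fin (M + 1) → ℝ} (hπ : π ∈ stdSimplex ℝ (Fin (M + 1))) : 0 ≤ S.T g π := by
  refine integral_nonneg fun x => ?_
  by_cases h : S.Dsum π x = 0
  · simp [h]
  · simp only [h, if_false]
    have hD : ∀ i, 0 ≤ S.D i π x := fun i => S.D_nonneg hπ.1 i x
    have hDs : 0 < S.Dsum π x :=
      lt_of_le_of_ne (Finset.sum_nonneg fun i _ => hD i) (Ne.symm h)
    refine mul_nonneg hDs.le (hg _ ⟨fun i => div_nonneg (hD i) hDs.le, ?_⟩)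
    rw [← Finset.sum_div]
    exact div_self h

lemma V_succ (S : DiagSetup E M) (N : ℕ) : S.V (N + 1) = S.Mop (S.V N) :=
  Function.iterate_succ_apply' _ _ _

lemma V_le_hmin (S : DiagSetup E M) (N : ℕ) (π : Fin (M + 1) → ℝ) :
    S.V N π ≤ S.hmin π := by
  cases N with
  | zero => simp [V]
  | succ N => rw [V_succ]; exact min_le_left _ _

lemma pi0_le_one {π : Fin (M + 1) → ℝ} (hπ : π ∈ stdSimplex ℝ (Fin (M + 1))) :
    π 0 ≤ 1 := by
  calc π 0 ≤ ∑ i, π i := Finset.single_le_sum (fun i _ => hπ.1 i) (Finset.mem_univ 0)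
  _ = 1 := hπ.2

lemma V_nonneg (S : DiagSetup E M) :
    ∀ N, ∀ π ∈ stdSimplex ℝ (Fin (M + 1)), 0 ≤ S.V N π := by
  intro N
  induction N with
  | zero => intro π hπ; simpa [V] using S.hmin_nonneg hπ.1
  | succ N ih =>
    intro π hπ
    rw [V_succ]
    refine le_min (S.hmin_nonneg hπ.1) ?_
    have hT := S.T_nonneg ih hπ
    have h0 := pi0_le_one hπ
    have := S.hc
    nlinarith

lemma V_eq_hmin (S : DiagSetup E M) {π : Fin (M + 1) → ℝ}
    (hπ : π ∈ stdSimplex ℝ (Fin (M + 1))) (hle : S.hmin π ≤ S.c * (1 - π 0)) :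
    ∀ N, S.V N π = S.hmin π := by
  intro N
  refine le_antisymm (S.V_le_hmin N π) ?_
  cases N with
  | zero => simp [V]
  | succ N =>
    rw [V_succ]
    have hT := S.T_nonneg (S.V_nonneg N) hπ
    exact le_min le_rfl (by linarith)

lemma single_mem (k : Fin (M + 1)) :
    (Pi.single k 1 : Fin (M + 1) → ℝ) ∈ stdSimplex ℝ (Fin (M + 1)) := by
  constructor
  · intro i
    rcases eq_or_ne i k with rfl | h
    · simp
    · simp [Pi.single_eq_of_ne h]
  · simp

lemma hj_single (S : DiagSetup E M) (k : Fin (M + 1)) (j : Fin M) :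
    S.hj j (Pi.single k 1) = S.a k j := by
  unfold hj
  rw [Finset.sum_eq_single k]
  · simp
  · intro i _ hik; simp [Pi.single_eq_of_ne hik]
  · simp

lemma hj_lin (S : DiagSetup E M) (j : Fin M) (s t : ℝ) (x y : Fin (M + 1) → ℝ) :
    S.hj j (s • x + t • y) = s * S.hj j x + t * S.hj j y := by
  simp only [hj, Pi.add_apply, Pi.smul_apply, smul_eq_mul, add_mul,
    Finset.sum_add_distrib, Finset.mul_sum, mul_assoc]

end DiagSetup

/-- `Γ^{(j)} ⊇ {π ∈ S^M : h_j(π) ≤ min(h(π), c(1-π₀))} ∋ e_j`; moreover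
`λe₀ + (1-λ)e_j ∈ Γ` for every `λ ∈ (0, c/(a_{0j}+c)]`, so the stopping region `Γ`
strictly contains the set of corners `{e_1, …, e_M}`. -/
theorem stopping_region_contains_corners {E : Type*} [MeasurableSpace E] {M : ℕ}
    (S : DiagSetup E M) (V0 : (Fin (M + 1) → ℝ) → ℝ)
    (hV0 : ∀ π ∈ stdSimplex ℝ (Fin (M + 1)),
      Tendsto (fun N => S.V N π) atTop (nhds (V0 π))) :
    (∀ j : Fin M,
      {π | π ∈ stdSimplex ℝ (Fin (M + 1)) ∧
          S.hj j π ≤ min (S.hmin π) (S.c * (1 - π 0))} ⊆ S.Gamma V0 j ∧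
      (Pi.single j.succ 1 : Fin (M + 1) → ℝ) ∈ S.Gamma V0 j ∧
      ∀ lam : ℝ, lam ∈ Set.Ioc 0 (S.c / (S.a 0 j + S.c)) →
        lam • (Pi.single 0 1 : Fin (M + 1) → ℝ)
            + (1 - lam) • (Pi.single j.succ 1 : Fin (M + 1) → ℝ)
          ∈ S.GammaAll V0) ∧
    {π : Fin (M + 1) → ℝ | ∃ j : Fin M, π = Pi.single j.succ 1} ⊂ S.GammaAll V0 := by
  have hV0eq : ∀ π ∈ stdSimplex ℝ (Fin (M + 1)), S.hmin π ≤ S.c * (1 - π 0) →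
      V0 π = S.hmin π := by
    intro π hπ hle
    have h1 : Tendsto (fun N => S.V N π) atTop (nhds (S.hmin π)) := by
      have : (fun N => S.V N π) = fun _ => S.hmin π := funext (S.V_eq_hmin hπ hle)
      rw [this]; exact tendsto_const_nhds
    exact tendsto_nhds_unique (hV0 π hπ) h1
  have hsub : ∀ j : Fin M, {π | π ∈ stdSimplex ℝ (Fin (M + 1)) ∧
      S.hj j π ≤ min (S.hmin π) (S.c * (1 - π 0))} ⊆ S.Gamma V0 j := by
    rintro j π ⟨hπ, hle⟩
    have h1 : S.hmin π = S.hj j π :=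
      le_antisymm (S.hmin_le_hj π j) (hle.trans (min_le_left _ _))
    have h2 : S.hmin π ≤ S.c * (1 - π 0) := h1.le.trans (hle.trans (min_le_right _ _))
    exact ⟨hπ, hV0eq π hπ h2, h1⟩
  have hej : ∀ j : Fin M, (Pi.single j.succ 1 : Fin (M + 1) → ℝ) ∈
      {π | π ∈ stdSimplex ℝ (Fin (M + 1)) ∧
        S.hj j π ≤ min (S.hmin π) (S.c * (1 - π 0))} := by
    intro j
    refine ⟨DiagSetup.single_mem _, ?_⟩
    rw [S.hj_single, S.haii]
    have h0 : (Pi.single j.succ 1 : Fin (M + 1) → ℝ) 0 = 0 :=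
      Pi.single_eq_of_ne (Fin.succ_ne_zero j).symm 1
    rw [h0]
    refine le_min (S.hmin_nonneg (DiagSetup.single_mem j.succ).1) ?_
    nlinarith [S.hc]
  have hlamval : ∀ (j : Fin M) (lam : ℝ),
      (lam • (Pi.single 0 1 : Fin (M + 1) → ℝ)
        + (1 - lam) • (Pi.single j.succ 1 : Fin (M + 1) → ℝ)) 0 = lam := by
    intro j lam
    simp [Pi.single_eq_of_ne (Fin.succ_ne_zero j).symm]
  have hlam : ∀ j : Fin M, ∀ lam : ℝ, lam ∈ Set.Ioc 0 (S.c / (S.a 0 j + S.c)) →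
      lam • (Pi.single 0 1 : Fin (M + 1) → ℝ)
        + (1 - lam) • (Pi.single j.succ 1 : Fin (M + 1) → ℝ) ∈ S.GammaAll V0 := by
    intro j lam ⟨hlam0, hlam1⟩
    have hac : 0 < S.a 0 j + S.c := by linarith [S.ha 0 j, S.hc]
    have hmul : lam * (S.a 0 j + S.c) ≤ S.c := by
      rw [← le_div_iff₀ hac] at *; exact hlam1
    have hlam_le : lam ≤ 1 := by nlinarith [S.ha 0 j, S.hc]
    set π : Fin (M + 1) → ℝ := lam • (Pi.single 0 1 : Fin (M + 1) → ℝ)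
        + (1 - lam) • (Pi.single j.succ 1 : Fin (M + 1) → ℝ) with hπdef
    have hπ : π ∈ stdSimplex ℝ (Fin (M + 1)) := by
      constructor
      · intro i
        have h1 := (DiagSetup.single_mem (M := M) 0).1 i
        have h2 := (DiagSetup.single_mem (M := M) j.succ).1 i
        simp only [hπdef, Pi.add_apply, Pi.smul_apply, smul_eq_mul]
        nlinarith
      · simp only [hπdef, Pi.add_apply, Pi.smul_apply, smul_eq_mul,
          Finset.sum_add_distrib, ← Finset.mul_sum]
        rw [(DiagSetup.single_mem (M := M) 0).2, (DiagSetup.single_mem (M := M) j.succ).2]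
        ring
    have hjval : S.hj j π = lam * S.a 0 j := by
      rw [hπdef, S.hj_lin, S.hj_single, S.hj_single, S.haii]
      ring
    have hπ0 : π 0 = lam := hlamval j lam
    have hle : S.hmin π ≤ S.c * (1 - π 0) := by
      rw [hπ0]
      refine (S.hmin_le_hj π j).trans ?_
      rw [hjval]; nlinarith
    exact ⟨hπ, hV0eq π hπ hle⟩
  refine ⟨fun j => ⟨hsub j, hsub j (hej j), hlam j⟩, ?_⟩
  have hcorners : {π : Fin (M + 1) → ℝ | ∃ j : Fin M, π = Pi.single j.succ 1}
      ⊆ S.GammaAll V0 := by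
    rintro π ⟨j, rfl⟩
    obtain ⟨h1, h2, _⟩ := hsub j (hej j)
    exact ⟨h1, h2⟩
  refine (Set.ssubset_iff_of_subset hcorners).mpr ?_
  have hj0 : Fin M := ⟨0, S.hM⟩
  set j0 : Fin M := ⟨0, S.hM⟩
  have hac : 0 < S.a 0 j0 + S.c := by linarith [S.ha 0 j0, S.hc]
  set lam0 : ℝ := S.c / (S.a 0 j0 + S.c) with hlam0def
  have hlam0pos : 0 < lam0 := div_pos S.hc hac
  refine ⟨lam0 • (Pi.single 0 1 : Fin (M + 1) → ℝ)
      + (1 - lam0) • (Pi.single j0.succ 1 : Fin (M + 1) → ℝ),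
    hlam j0 lam0 ⟨hlam0pos, le_rfl⟩, ?_⟩
  rintro ⟨k, hk⟩
  have := congrFun hk 0
  rw [hlamval j0 lam0] at this
  rw [Pi.single_eq_of_ne (Fin.succ_ne_zero k).symm 1] at this
  exact absurd this (ne_of_gt hlam0pos)
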